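/- arXiv:1603.01609 — 4 statements merged into one kernel-verified Lean document; each statement's English description precedes it below -/
import Mathlib

section
/- Let H be a C^{1+BV} lift of degree d ≥ 2. Then there exists a constant C₀ ≥ 0 with the following property: for every n ≥ 1 and all real a < b, if each interval (H^[i](a), H^[i](b)) for 0 ≤ i < n has length at most 1 and these intervals are pairwise disjoint modulo ℤ (i.e. for all 0 ≤ i < j < n and every integer m, the open intervals (H^[i](a), H^[i](b)) and (m + H^[j](a), m + H^[j](b)) are disjoint), then for all x, y ∈ [a, b]: log(deriv (H^[n]) x) − log(deriv (H^[n]) y) ≤ C₀. -/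
open Function Set Filter Asymptotics

/-- A `C^{1+BV}` lift of degree `d`: continuously differentiable with positive
derivative, commuting with `x ↦ x + 1` up to `d`, and with derivative of
bounded variation on `[0,1]`. -/
def IsLift (d : ℤ) (H : ℝ → ℝ) : Prop :=
  ContDiff ℝ 1 H ∧ (∀ x, 0 < deriv H x) ∧ (∀ x, H (x + 1) = H x + d) ∧
    BoundedVariationOn (deriv H) (Set.Icc 0 1)

/-- `p` is a periodic point of `H` of period `s ≥ 1` (as a circle map). -/
def IsPeriodicPtOfPeriod (H : ℝ → ℝ) (s : ℕ) (p : ℝ) : Prop :=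
  1 ≤ s ∧ ∃ m : ℤ, H^[s] p - p = m

/-- The set of parabolic points of `H`: periodic points with multiplier `1`. -/
def Par (H : ℝ → ℝ) : Set ℝ :=
  {p | ∃ s, IsPeriodicPtOfPeriod H s p ∧ deriv (H^[s]) p = 1}

/-- `H` is weakly expanding: around every periodic point (of least period `s`)
the derivative of `H^[s]` is `> 1` on a punctured neighborhood. -/
def WeaklyExpanding (H : ℝ → ℝ) : Prop :=
  ∀ p s, IsPeriodicPtOfPeriod H s p → (∀ t, IsPeriodicPtOfPeriod H t p → s ≤ t) →
    ∃ δ > 0, ∀ x, 0 < |x - p| → |x - p| < δ → 1 < deriv (H^[s]) x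

/-- `H` is metrically expanding: `deriv H > 1` off the parabolic points. -/
def MetricallyExpanding (H : ℝ → ℝ) : Prop :=
  ∀ x, x ∉ Par H → 1 < deriv H x

/-- Distance on the circle `ℝ/ℤ`. -/
noncomputable def dist1 (x y : ℝ) : ℝ := ⨅ m : ℤ, |x - y - (m : ℝ)|

/-- The open interval `(a,b)` (with `a < b`, `b - a < 1`) is a nice interval for `H`:
no iterate of an endpoint enters the interval modulo `ℤ`. -/
def NiceInterval (H : ℝ → ℝ) (a b : ℝ) : Prop :=
  a < b ∧ b - a < 1 ∧
    ∀ n : ℕ, ∀ m : ℤ,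
      H^[n] a ∉ Set.Ioo (a + m) (b + m) ∧ H^[n] b ∉ Set.Ioo (a + m) (b + m)

/-- `H^[k] x` lies in `(a,b)` modulo `ℤ`, with `k ≥ 1`. -/
def EntersAt (H : ℝ → ℝ) (a b : ℝ) (x : ℝ) (k : ℕ) : Prop :=
  1 ≤ k ∧ ∃ m : ℤ, H^[k] x ∈ Set.Ioo (a + m) (b + m)

/-- The set of points that eventually enter `(a,b)` modulo `ℤ`. -/
def DSet (H : ℝ → ℝ) (a b : ℝ) : Set ℝ := {x | ∃ k, EntersAt H a b x k}

/-- `k` is the first entry time of `x` into `(a,b)` modulo `ℤ`. -/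
def FirstEntryTime (H : ℝ → ℝ) (a b : ℝ) (x : ℝ) (k : ℕ) : Prop :=
  EntersAt H a b x k ∧ ∀ j, EntersAt H a b x j → k ≤ j

/-!
Write `g = log ∘ H'`; it is `1`-periodic, and of bounded variation on `[0, 1]` because `H'`
is, being continuous and positive there. By the chain rule
`log (Hⁿ)' x - log (Hⁿ)' y = ∑_{i<n} (g (Hⁱ x) - g (Hⁱ y))`, and the `i`-th term is bounded
by the variation of `g` on `[Hⁱ a, Hⁱ b]`. Translate each of these intervals by an integer so
that it starts in `[0, 1)` and cut it at `1`; as they have length at most `1` and are pairwise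
disjoint modulo `ℤ`, this gives two families of pairwise disjoint subintervals of `[0, 1]`,
so `C₀ = 2 Var_{[0,1]} g` works.
-/

open Real

theorem eVariationOn.sum_Icc_le {α E ι : Type*} [LinearOrder α] [DenselyOrdered α]
    [PseudoEMetricSpace E] (f : α → E) (s : Finset ι) {u v : ι → α} {A B : α}
    (hA : ∀ i ∈ s, A ≤ u i) (hB : ∀ i ∈ s, v i ≤ B)
    (hs : (s : Set ι).PairwiseDisjoint fun i => Ioo (u i) (v i)) :
    ∑ i ∈ s, eVariationOn f (Icc (u i) (v i)) ≤ eVariationOn f (Icc A B) := by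
  classical
  induction s using Finset.induction_on_max_value u generalizing B with
  | empty => simp
  | insert a s ha hmax ih =>
    rw [Finset.forall_mem_insert] at hA hB
    rw [Finset.coe_insert, pairwiseDisjoint_insert] at hs
    rw [Finset.sum_insert ha]
    rcases le_or_gt (v a) (u a) with hvu | huv
    · rw [eVariationOn.subsingleton f (subsingleton_Icc_of_ge hvu), zero_add]
      exact ih hA.2 hB.2 hs.1
    -- `u a` is the largest left endpoint, so an interval reaching past it meets `Ioo (u a) (v a)`
    have hleft : ∀ j ∈ s, v j ≤ u a := by
      intro j hj
      by_contra! hj'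
      obtain ⟨t, ht⟩ := nonempty_Ioo.2 (lt_min huv hj')
      exact disjoint_left.1 (hs.2 j hj (ne_of_mem_of_not_mem hj ha).symm)
        ⟨ht.1, ht.2.trans_le (min_le_left _ _)⟩
        ⟨(hmax j hj).trans_lt ht.1, ht.2.trans_le (min_le_right _ _)⟩
    calc eVariationOn f (Icc (u a) (v a)) + ∑ i ∈ s, eVariationOn f (Icc (u i) (v i))
        ≤ eVariationOn f (Icc A (u a)) + eVariationOn f (Icc (u a) (v a)) := by
          rw [add_comm]
          gcongr
          exact ih hA.2 hleft hs.1
      _ = eVariationOn f (Icc A (v a)) := by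
          simpa using eVariationOn.Icc_add_Icc f hA.1 huv.le (mem_univ (u a))
      _ ≤ eVariationOn f (Icc A B) := eVariationOn.mono f (Icc_subset_Icc le_rfl hB.1)

namespace Function.Periodic

variable {E : Type*} [PseudoEMetricSpace E] {g : ℝ → E}

theorem eVariationOn_Icc_add {p : ℝ} (hg : Periodic g p) (a b : ℝ) :
    eVariationOn g (Icc (a + p) (b + p)) = eVariationOn g (Icc a b) := by
  have h := eVariationOn.comp_eq_of_monotoneOn g (· + p)
    ((monotone_id.add_const p).monotoneOn (Icc a b))
  rwa [image_add_const_Icc, show g ∘ (· + p) = g from funext hg, eq_comm] at h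

theorem eVariationOn_Icc_le_add (hg : Periodic g 1) {c e : ℝ} (hc : c ≤ 1) :
    eVariationOn g (Icc c e) ≤
      eVariationOn g (Icc c (min e 1)) + eVariationOn g (Icc 0 (e - 1)) := by
  rcases le_total e 1 with he | he
  · rw [min_eq_left he]
    exact le_self_add
  · rw [min_eq_right he, ← hg.eVariationOn_Icc_add 0 (e - 1), zero_add, sub_add_cancel]
    simpa using (eVariationOn.Icc_add_Icc g hc he (mem_univ 1)).ge

theorem sum_eVariationOn_Icc_le {ι : Type*} (hg : Periodic g 1) (s : Finset ι) {c e : ι → ℝ}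
    (hlen : ∀ i ∈ s, e i ≤ c i + 1)
    (hdisj : (s : Set ι).Pairwise fun i j =>
      ∀ p q : ℤ, Disjoint (Ioo (c i + p) (e i + p)) (Ioo (c j + q) (e j + q))) :
    ∑ i ∈ s, eVariationOn g (Icc (c i) (e i)) ≤ 2 * eVariationOn g (Icc 0 1) := by
  set k : ι → ℤ := fun i => ⌊c i⌋
  have hk : ∀ i, (k i : ℝ) ≤ c i ∧ c i < k i + 1 :=
    fun i => ⟨Int.floor_le _, Int.lt_floor_add_one _⟩
  have hsplit : ∀ i ∈ s, eVariationOn g (Icc (c i) (e i)) ≤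
      eVariationOn g (Icc (c i - k i) (min (e i - k i) 1)) +
        eVariationOn g (Icc 0 (e i - k i - 1)) := by
    intro i _
    have hshift := (hg.int_mul (k i)).eVariationOn_Icc_add (c i - k i) (e i - k i)
    rw [mul_one, sub_add_cancel, sub_add_cancel] at hshift
    rw [hshift]
    exact hg.eVariationOn_Icc_le_add (by linarith [hk i])
  have hlow : (s : Set ι).PairwiseDisjoint fun i => Ioo (c i - k i) (min (e i - k i) 1) := by
    refine fun i hi j hj hij => (hdisj hi hj hij (-k i) (-k j)).mono ?_ ?_
    · exact Ioo_subset_Ioo (by push_cast; linarith) (by push_cast; exact min_le_left _ _)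
    · exact Ioo_subset_Ioo (by push_cast; linarith) (by push_cast; exact min_le_left _ _)
  have hhigh : (s : Set ι).PairwiseDisjoint fun i => Ioo 0 (e i - k i - 1) := by
    refine fun i hi j hj hij => (hdisj hi hj hij (-k i - 1) (-k j - 1)).mono ?_ ?_ <;>
      exact Ioo_subset_Ioo (by push_cast; linarith [hk i, hk j]) (by push_cast; linarith)
  calc ∑ i ∈ s, eVariationOn g (Icc (c i) (e i))
      ≤ ∑ i ∈ s, (eVariationOn g (Icc (c i - k i) (min (e i - k i) 1)) +
          eVariationOn g (Icc 0 (e i - k i - 1))) := Finset.sum_le_sum hsplit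
    _ = ∑ i ∈ s, eVariationOn g (Icc (c i - k i) (min (e i - k i) 1)) +
          ∑ i ∈ s, eVariationOn g (Icc 0 (e i - k i - 1)) := Finset.sum_add_distrib
    _ ≤ eVariationOn g (Icc 0 1) + eVariationOn g (Icc 0 1) := by
      gcongr
      · exact eVariationOn.sum_Icc_le g s (fun i _ => by linarith [hk i])
          (fun i _ => min_le_right _ _) hlow
      · exact eVariationOn.sum_Icc_le g s (fun i _ => le_rfl)
          (fun i hi => by linarith [hk i, hlen i hi]) hhigh
    _ = 2 * eVariationOn g (Icc 0 1) := (two_mul _).symm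

end Function.Periodic

theorem disjoint_Ioo_add_int_of_disjoint {c e c' e' : ℝ}
    (h : ∀ m : ℤ, Disjoint (Ioo c e) (Ioo (m + c') (m + e'))) (p q : ℤ) :
    Disjoint (Ioo (c + p) (e + p)) (Ioo (c' + q) (e' + q)) := by
  refine disjoint_left.2 fun t ht ht' => disjoint_left.1 (h (q - p))
    (show t - p ∈ Ioo c e from ⟨by linarith [ht.1], by linarith [ht.2]⟩) ?_
  constructor <;> push_cast <;> linarith [ht'.1, ht'.2]

theorem Real.lipschitzOnWith_log_Ici {m : ℝ} (hm : 0 < m) :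
    LipschitzOnWith (toNNReal m⁻¹) log (Ici m) := by
  refine LipschitzOnWith.of_dist_le_mul fun x hx y hy => ?_
  rw [coe_toNNReal _ (inv_nonneg.2 hm.le), dist_eq, dist_eq]
  refine (convex_Ici m).norm_image_sub_le_of_norm_deriv_le
    (fun z hz => differentiableAt_log (hm.trans_le hz).ne') (fun z hz => ?_) hy hx
  rw [deriv_log, norm_inv, norm_of_nonneg (hm.trans_le hz).le]
  exact inv_anti₀ hm hz

theorem BoundedVariationOn.log {α : Type*} [LinearOrder α] [TopologicalSpace α] {f : α → ℝ}
    {s : Set α} (hf : BoundedVariationOn f s) (hs : IsCompact s) (hcont : ContinuousOn f s)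
    (hpos : ∀ x ∈ s, 0 < f x) : BoundedVariationOn (log ∘ f) s := by
  rcases s.eq_empty_or_nonempty with rfl | hne
  · simp [BoundedVariationOn]
  obtain ⟨z, hz, hmin⟩ := hs.exists_isMinOn hne hcont
  exact (lipschitzOnWith_log_Ici (hpos z hz)).comp_boundedVariationOn (fun x hx => hmin hx) hf

theorem deriv_iterate_eq_prod {𝕜 : Type*} [NontriviallyNormedField 𝕜] {f : 𝕜 → 𝕜}
    (hf : Differentiable 𝕜 f) (n : ℕ) (x : 𝕜) :
    deriv f^[n] x = ∏ i ∈ Finset.range n, deriv f (f^[i] x) := by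
  induction n with
  | zero => simp
  | succ n ih =>
    rw [iterate_succ', deriv_comp x (hf _) ((hf.iterate n) x), Finset.prod_range_succ, ih,
      mul_comm]

namespace IsLift

variable {d : ℤ} {H : ℝ → ℝ}

theorem periodic_deriv (hH : IsLift d H) : Periodic (deriv H) 1 := by
  obtain ⟨-, -, hcomm, -⟩ := hH
  intro x
  rw [← deriv_comp_add_const, show (fun y => H (y + 1)) = fun y => H y + d from funext hcomm,
    deriv_add_const]

theorem boundedVariationOn_log_deriv (hH : IsLift d H) :
    BoundedVariationOn (log ∘ deriv H) (Icc 0 1) := by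
  obtain ⟨hC1, hpos, -, hBV⟩ := hH
  exact hBV.log isCompact_Icc (hC1.continuous_deriv le_rfl).continuousOn fun x _ => hpos x

theorem log_deriv_iterate (hH : IsLift d H) (n : ℕ) (x : ℝ) :
    log (deriv H^[n] x) = ∑ i ∈ Finset.range n, log (deriv H (H^[i] x)) := by
  obtain ⟨hC1, hpos, -, -⟩ := hH
  rw [deriv_iterate_eq_prod (hC1.differentiable one_ne_zero), log_prod]
  exact fun i _ => (hpos _).ne'

theorem log_deriv_iterate_sub_le (hH : IsLift d H) {n : ℕ} {a b : ℝ}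
    (hlen : ∀ i < n, H^[i] b - H^[i] a ≤ 1)
    (hdisj : ∀ i j, i < j → j < n → ∀ m : ℤ,
      Disjoint (Ioo (H^[i] a) (H^[i] b)) (Ioo ((m : ℝ) + H^[j] a) ((m : ℝ) + H^[j] b)))
    {x y : ℝ} (hx : x ∈ Icc a b) (hy : y ∈ Icc a b) :
    log (deriv H^[n] x) - log (deriv H^[n] y) ≤
      2 * (eVariationOn (log ∘ deriv H) (Icc 0 1)).toReal := by
  set g := log ∘ deriv H
  have hmono : Monotone H := (strictMono_of_deriv_pos hH.2.1).monotone
  have hmem : ∀ i, ∀ t ∈ Icc a b, H^[i] t ∈ Icc (H^[i] a) (H^[i] b) := fun i t ht =>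
    ⟨hmono.iterate i ht.1, hmono.iterate i ht.2⟩
  have hvar : ∑ i ∈ Finset.range n, eVariationOn g (Icc (H^[i] a) (H^[i] b)) ≤
      2 * eVariationOn g (Icc 0 1) := by
    refine (hH.periodic_deriv.comp log).sum_eVariationOn_Icc_le _
      (fun i hi => by linarith [hlen i (Finset.mem_range.1 hi)]) fun i hi j hj hij => ?_
    rcases hij.lt_or_gt with hij | hji
    · exact disjoint_Ioo_add_int_of_disjoint (hdisj i j hij (Finset.mem_range.1 hj))
    · exact fun p q =>
        (disjoint_Ioo_add_int_of_disjoint (hdisj j i hji (Finset.mem_range.1 hi)) q p).symm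
  have hfin : 2 * eVariationOn g (Icc 0 1) ≠ ⊤ :=
    ENNReal.mul_ne_top ENNReal.ofNat_ne_top hH.boundedVariationOn_log_deriv
  rw [hH.log_deriv_iterate, hH.log_deriv_iterate, ← Finset.sum_sub_distrib]
  calc ∑ i ∈ Finset.range n, (g (H^[i] x) - g (H^[i] y))
      ≤ ∑ i ∈ Finset.range n, dist (g (H^[i] x)) (g (H^[i] y)) :=
        Finset.sum_le_sum fun i _ => le_abs_self _
    _ ≤ (2 * eVariationOn g (Icc 0 1)).toReal := by
      rw [← ENNReal.ofReal_le_iff_le_toReal hfin,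
        ENNReal.ofReal_sum_of_nonneg fun _ _ => dist_nonneg]
      refine le_trans (Finset.sum_le_sum fun i _ => ?_) hvar
      rw [← edist_dist]
      exact eVariationOn.edist_le g (hmem i x hx) (hmem i y hy)
    _ = 2 * (eVariationOn g (Icc 0 1)).toReal := by simp

end IsLift

theorem stmt5_general (d : ℤ) (H : ℝ → ℝ) (hH : IsLift d H) :
    ∃ C₀ : ℝ, 0 ≤ C₀ ∧
      ∀ n : ℕ, 1 ≤ n → ∀ a b : ℝ, a < b →
        (∀ i < n, H^[i] b - H^[i] a ≤ 1) →
        (∀ i j, i < j → j < n → ∀ m : ℤ,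
          Disjoint (Set.Ioo (H^[i] a) (H^[i] b))
            (Set.Ioo ((m : ℝ) + H^[j] a) ((m : ℝ) + H^[j] b))) →
        ∀ x ∈ Set.Icc a b, ∀ y ∈ Set.Icc a b,
          Real.log (deriv (H^[n]) x) - Real.log (deriv (H^[n]) y) ≤ C₀ :=
  ⟨_, by positivity, fun _ _ _ _ _ hlen hdisj _ hx _ hy =>
    hH.log_deriv_iterate_sub_le hlen hdisj hx hy⟩

theorem stmt5 (d : ℤ) (hd : 2 ≤ d) (H : ℝ → ℝ) (hH : IsLift d H) :
    ∃ C₀ : ℝ, 0 ≤ C₀ ∧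
      ∀ n : ℕ, 1 ≤ n → ∀ a b : ℝ, a < b →
        (∀ i < n, H^[i] b - H^[i] a ≤ 1) →
        (∀ i j, i < j → j < n → ∀ m : ℤ,
          Disjoint (Set.Ioo (H^[i] a) (H^[i] b))
            (Set.Ioo ((m : ℝ) + H^[j] a) ((m : ℝ) + H^[j] b))) →
        ∀ x ∈ Set.Icc a b, ∀ y ∈ Set.Icc a b,
          Real.log (deriv (H^[n]) x) - Real.log (deriv (H^[n]) y) ≤ C₀ :=
  stmt5_general d H hH
end

section
/- Given ε > 0, an integer n ≥ 1, and real numbers x₁ < x₂ < ⋯ < x_n < x₁ + 1, there exists δ > 0 such that for any real numbers y₁, …, y_n with |y_j − x_j| < δ for each j, there exists a real analytic strictly increasing bijection φ : ℝ → ℝ satisfying, for all x ∈ ℝ: φ(x+1) = φ(x) + 1, |φ(x) − x| < ε, and |deriv φ x − 1| < ε, and moreover φ(x_j) = y_j for each j with 1 ≤ j ≤ n. -/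
open Function Set Filter Asymptotics

/-!
Since `sin (π t) ^ 2` is analytic, `1`-periodic and vanishes exactly on `ℤ`, the products
`∏_{i ≠ j} sin (π (t - xᵢ)) ^ 2 / sin (π (xⱼ - xᵢ)) ^ 2` form a periodic analogue of the Lagrange
basis for nodes that are distinct modulo `1`. Interpolating the displacements `yⱼ - xⱼ` in this
basis gives an analytic `1`-periodic `ψ` which, together with `ψ'`, is uniformly small when the
displacements are, since the basis functions and their derivatives are continuous and periodic,
hence bounded. Then `φ = id + ψ` has `φ' > 0`, stays at bounded distance from the identity (so it
is onto), and maps `xⱼ` to `yⱼ`.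
-/

open Real Finset

lemma sin_pi_mul_ne_zero_of_abs_lt_one {t : ℝ} (h0 : t ≠ 0) (h1 : |t| < 1) : sin (π * t) ≠ 0 := by
  have hπ := pi_pos
  obtain ⟨hlo, hhi⟩ := abs_lt.1 h1
  rw [Ne, sin_eq_zero_iff_of_lt_of_lt (by nlinarith) (by nlinarith)]
  exact mul_ne_zero pi_ne_zero h0

lemma Function.Periodic.deriv {f : ℝ → ℝ} {p : ℝ} (hf : Periodic f p) : Periodic (deriv f) p :=
  fun t => by rw [← deriv_comp_add_const, hf.funext]

lemma Function.Periodic.exists_forall_abs_sum_mul_lt {ι : Type*} [Fintype ι] {v : ι → ℝ → ℝ}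
    {p : ℝ} (hp : p ≠ 0) (hper : ∀ j, Periodic (v j) p) (hv : ∀ j, Continuous (v j))
    {η : ℝ} (hη : 0 < η) :
    ∃ δ > 0, ∀ c : ι → ℝ, (∀ j, |c j| < δ) → ∀ t, |∑ j, c j * v j t| < η := by
  have hF : Periodic (fun t => ∑ j, |v j t|) p := fun t => by simp only [hper _ t]
  obtain ⟨R, hR, hFR⟩ := (hF.isBounded_of_continuous hp
    (continuous_finsetSum _ fun j _ => (hv j).abs)).exists_pos_norm_lt
  refine ⟨η / R, by positivity, fun c hc t => ?_⟩
  have hFt : ∑ j, |v j t| < R := by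
    simpa [abs_of_nonneg (sum_nonneg fun j _ => abs_nonneg (v j t))] using hFR _ ⟨t, rfl⟩
  calc |∑ j, c j * v j t| ≤ ∑ j, |c j| * |v j t| := by
        simpa only [abs_mul] using abs_sum_le_sum_abs (fun j => c j * v j t) univ
    _ ≤ ∑ j, η / R * |v j t| :=
        sum_le_sum fun j _ => mul_le_mul_of_nonneg_right (hc j).le (abs_nonneg _)
    _ = η / R * ∑ j, |v j t| := (mul_sum _ _ _).symm
    _ < η / R * R := by gcongr
    _ = η := div_mul_cancel₀ η hR.ne'

lemma deriv_id_add {ψ : ℝ → ℝ} {t : ℝ} (hψ : DifferentiableAt ℝ ψ t) :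
    deriv (fun s => s + ψ s) t = 1 + deriv ψ t := by
  rw [deriv_fun_add differentiableAt_fun_id hψ, deriv_id'']

lemma strictMono_id_add {ψ : ℝ → ℝ} (hψ : Differentiable ℝ ψ) (h : ∀ t, |deriv ψ t| < 1) :
    StrictMono fun t => t + ψ t :=
  strictMono_of_deriv_pos fun t => by
    rw [deriv_id_add (hψ t)]
    linarith [neg_abs_le (deriv ψ t), h t]

lemma surjective_id_add {ψ : ℝ → ℝ} (hψ : Continuous ψ) {C : ℝ} (h : ∀ t, |ψ t| ≤ C) :
    Function.Surjective fun t => t + ψ t :=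
  (continuous_id.add hψ).surjective
    (tendsto_atTop_mono (fun t => show t + -C ≤ t + ψ t by linarith [neg_abs_le (ψ t), h t])
      (tendsto_atTop_add_const_right _ (-C) tendsto_id))
    (tendsto_atBot_mono (fun t => show t + ψ t ≤ t + C by linarith [le_abs_self (ψ t), h t])
      (tendsto_atBot_add_const_right _ C tendsto_id))

section TrigInterp

variable {n : ℕ} (x : Fin n → ℝ)

noncomputable def trigLagrangeBasis (j : Fin n) (t : ℝ) : ℝ :=
  ∏ i ∈ univ.erase j, sin (π * (t - x i)) ^ 2 / sin (π * (x j - x i)) ^ 2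

noncomputable def trigInterp (c : Fin n → ℝ) (t : ℝ) : ℝ :=
  ∑ j, c j * trigLagrangeBasis x j t

lemma analyticOnNhd_trigLagrangeBasis (j : Fin n) :
    AnalyticOnNhd ℝ (trigLagrangeBasis x j) univ := by
  intro t _
  unfold trigLagrangeBasis
  refine Finset.analyticAt_fun_prod _ fun i _ => AnalyticAt.div_const ?_
  fun_prop

lemma periodic_trigLagrangeBasis (j : Fin n) : Function.Periodic (trigLagrangeBasis x j) 1 := by
  intro t
  refine prod_congr rfl fun i _ => ?_
  rw [add_sub_right_comm, mul_add, mul_one, sin_add_pi, neg_sq]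

lemma trigLagrangeBasis_apply_self (hx : Function.Injective x) (hx1 : ∀ i j, |x i - x j| < 1)
    (j : Fin n) : trigLagrangeBasis x j (x j) = 1 :=
  prod_eq_one fun i hi => div_self <| pow_ne_zero _ <|
    sin_pi_mul_ne_zero_of_abs_lt_one (sub_ne_zero.2 <| hx.ne (ne_of_mem_erase hi).symm) (hx1 j i)

lemma trigLagrangeBasis_apply_of_ne {i j : Fin n} (h : i ≠ j) : trigLagrangeBasis x j (x i) = 0 :=
  prod_eq_zero (mem_erase.2 ⟨h, mem_univ i⟩) (by simp)

lemma trigInterp_apply_node (hx : Function.Injective x) (hx1 : ∀ i j, |x i - x j| < 1)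
    (c : Fin n → ℝ) (i : Fin n) : trigInterp x c (x i) = c i := by
  rw [trigInterp, sum_eq_single i
    (fun j _ hj => by rw [trigLagrangeBasis_apply_of_ne x hj.symm, mul_zero])
    (fun h => (h (mem_univ i)).elim), trigLagrangeBasis_apply_self x hx hx1, mul_one]

lemma analyticOnNhd_trigInterp (c : Fin n → ℝ) : AnalyticOnNhd ℝ (trigInterp x c) univ :=
  fun t _ => Finset.analyticAt_fun_sum _ fun j _ =>
    analyticAt_const.mul (analyticOnNhd_trigLagrangeBasis x j t trivial)

lemma periodic_trigInterp (c : Fin n → ℝ) : Function.Periodic (trigInterp x c) 1 := fun t => by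
  simp only [trigInterp, periodic_trigLagrangeBasis x _ t]

lemma deriv_trigInterp (c : Fin n → ℝ) (t : ℝ) :
    deriv (trigInterp x c) t = ∑ j, c j * deriv (trigLagrangeBasis x j) t := by
  have hd : ∀ j, DifferentiableAt ℝ (trigLagrangeBasis x j) t :=
    fun j => (analyticOnNhd_trigLagrangeBasis x j t trivial).differentiableAt
  unfold trigInterp
  rw [deriv_fun_sum fun j _ => (hd j).const_mul _]
  exact sum_congr rfl fun j _ => deriv_const_mul _ (hd j)

lemma exists_forall_abs_trigInterp_lt {η : ℝ} (hη : 0 < η) :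
    ∃ δ > 0, ∀ c : Fin n → ℝ, (∀ j, |c j| < δ) →
      ∀ t, |trigInterp x c t| < η ∧ |deriv (trigInterp x c) t| < η := by
  obtain ⟨δ₀, hδ₀, h₀⟩ := Function.Periodic.exists_forall_abs_sum_mul_lt one_ne_zero
    (periodic_trigLagrangeBasis x) (fun j => (analyticOnNhd_trigLagrangeBasis x j).continuous) hη
  obtain ⟨δ₁, hδ₁, h₁⟩ := Function.Periodic.exists_forall_abs_sum_mul_lt one_ne_zero
    (fun j => (periodic_trigLagrangeBasis x j).deriv)
    (fun j => (analyticOnNhd_trigLagrangeBasis x j).deriv.continuous) hη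
  refine ⟨min δ₀ δ₁, lt_min hδ₀ hδ₁, fun c hc t => ⟨?_, ?_⟩⟩
  · exact h₀ c (fun j => (hc j).trans_le (min_le_left _ _)) t
  · rw [deriv_trigInterp]
    exact h₁ c (fun j => (hc j).trans_le (min_le_right _ _)) t

end TrigInterp

theorem stmt13 (ε : ℝ) (hε : 0 < ε) (n : ℕ) (hn : 1 ≤ n)
    (x : Fin n → ℝ) (hmono : StrictMono x)
    (hlt : ∀ i : Fin n, x i < x ⟨0, hn⟩ + 1) :
    ∃ δ > 0, ∀ y : Fin n → ℝ, (∀ j, |y j - x j| < δ) →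
      ∃ φ : ℝ → ℝ, AnalyticOnNhd ℝ φ Set.univ ∧ StrictMono φ ∧
        Function.Bijective φ ∧
        (∀ t : ℝ, φ (t + 1) = φ t + 1) ∧
        (∀ t : ℝ, |φ t - t| < ε) ∧
        (∀ t : ℝ, |deriv φ t - 1| < ε) ∧
        ∀ j, φ (x j) = y j := by
  have hwindow : ∀ i j, |x i - x j| < 1 := fun i j => by
    have h0 : ∀ k, x ⟨0, hn⟩ ≤ x k := fun k => hmono.monotone (Nat.zero_le k)
    rw [abs_sub_lt_iff]
    constructor <;> linarith [hlt i, hlt j, h0 i, h0 j]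
  obtain ⟨δ, hδ, hsmall⟩ := exists_forall_abs_trigInterp_lt x (lt_min hε one_pos)
  refine ⟨δ, hδ, fun y hy => ?_⟩
  set ψ := trigInterp x (y - x)
  have hψ : AnalyticOnNhd ℝ ψ univ := analyticOnNhd_trigInterp x _
  have hψd : Differentiable ℝ ψ := fun t => (hψ t trivial).differentiableAt
  have hψ_lt : ∀ t, |ψ t| < min ε 1 ∧ |deriv ψ t| < min ε 1 := hsmall _ hy
  have hφ_mono := strictMono_id_add hψd fun t => (hψ_lt t).2.trans_le (min_le_right _ _)
  refine ⟨fun t => t + ψ t, analyticOnNhd_id.add hψ, hφ_mono,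
    ⟨hφ_mono.injective, surjective_id_add hψ.continuous fun t => (hψ_lt t).1.le⟩,
    fun t => by simp only [ψ, periodic_trigInterp x _ t]; ring,
    fun t => ?_, fun t => ?_, fun j => ?_⟩
  · simpa using (hψ_lt t).1.trans_le (min_le_left _ _)
  · simpa [deriv_id_add (hψd t)] using (hψ_lt t).2.trans_le (min_le_left _ _)
  · simp [ψ, trigInterp_apply_node x hmono.injective hwindow]
end

section
/- Let H be a C^{1+BV} lift of degree d ≥ 2 such that deriv H x ≥ 1 for all x ∈ ℝ and {x ∈ ℝ : deriv H x = 1} = Par(H). Let N be a positive integer, L := (d^N − 1)/(d − 1), and define φ(x) := (1/L) · Σ_{k=0}^{N−1} H^[k](x). Then: (i) φ(x+1) = φ(x) + 1 for all x, and φ is a continuously differentiable strictly increasing bijection of ℝ with deriv φ x > 0 everywhere; (ii) the conjugate Ĥ := φ ∘ H ∘ φ⁻¹ satisfies, for all x ∈ ℝ, deriv Ĥ (φ(x)) = (Σ_{k=1}^{N} deriv (H^[k]) x) / (Σ_{k=0}^{N−1} deriv (H^[k]) x) ≥ 1, with equality if and only if x ∈ Par(H). -/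
/-!
`Par H` is forward invariant, since the multipliers of `x` and `H x` agree; as `H' ≥ 1` and
`{H' = 1} = Par H`, this gives `(H^[N])' x = 1` exactly when `x ∈ Par H`. By the chain rule
`φ' = S / L` with `S = ∑_{k<N} (H^[k])'`, so at `φ x` the conjugate has derivative
`φ'(H x) H'(x) / φ'(x) = ∑_{k=1}^{N} (H^[k])'(x) / S x = 1 + ((H^[N])'(x) - 1) / S x`.
-/

open Function Set Filter Asymptotics

section Iterate

theorem ContDiff.iterate {𝕜 E : Type*} [NontriviallyNormedField 𝕜] [NormedAddCommGroup E]
    [NormedSpace 𝕜 E] {n : WithTop ℕ∞} {f : E → E} (hf : ContDiff 𝕜 n f) (k : ℕ) :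
    ContDiff 𝕜 n f^[k] := by
  induction k with
  | zero => exact contDiff_id
  | succ k ih => exact ih.comp hf

variable {𝕜 : Type*} [NontriviallyNormedField 𝕜] {f : 𝕜 → 𝕜}

theorem deriv_iterate_succ_apply (hf : Differentiable 𝕜 f) (n : ℕ) (x : 𝕜) :
    deriv f^[n + 1] x = deriv f^[n] (f x) * deriv f x := by
  rw [iterate_succ, deriv_comp x ((hf.iterate n) _) (hf x)]

theorem deriv_iterate_succ_apply' (hf : Differentiable 𝕜 f) (n : ℕ) (x : 𝕜) :
    deriv f^[n + 1] x = deriv f (f^[n] x) * deriv f^[n] x := by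
  rw [iterate_succ', deriv_comp x (hf _) ((hf.iterate n) x)]

end Iterate

section Expanding

variable {f : ℝ → ℝ}

theorem one_le_deriv_iterate (hf : Differentiable ℝ f) (hge : ∀ x, 1 ≤ deriv f x) (n : ℕ)
    (x : ℝ) : 1 ≤ deriv f^[n] x := by
  induction n with
  | zero => simp
  | succ n ih =>
    rw [deriv_iterate_succ_apply' hf]
    nlinarith [hge (f^[n] x)]

theorem deriv_iterate_eq_one_iff (hf : Differentiable ℝ f) (hge : ∀ x, 1 ≤ deriv f x)
    (hinv : MapsTo f {x | deriv f x = 1} {x | deriv f x = 1}) {n : ℕ} (hn : n ≠ 0) (x : ℝ) :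
    deriv f^[n] x = 1 ↔ deriv f x = 1 := by
  obtain ⟨n, rfl⟩ := Nat.exists_eq_add_one_of_ne_zero hn
  clear hn
  rw [deriv_iterate_succ_apply hf]
  constructor
  · intro h
    nlinarith [one_le_deriv_iterate hf hge n (f x), hge x]
  · intro h
    suffices ∀ y, deriv f y = 1 → deriv f^[n] y = 1 by rw [this _ (hinv h), h, one_mul]
    induction n with
    | zero => simp
    | succ n ih =>
      intro y hy
      rw [deriv_iterate_succ_apply hf, ih _ (hinv hy), hy, one_mul]

theorem sum_Icc_one_eq_sum_range_add_sub {M : Type*} [AddCommGroup M] (g : ℕ → M) (N : ℕ) :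
    ∑ k ∈ Finset.Icc 1 N, g k = ∑ k ∈ Finset.range N, g k + g N - g 0 := by
  rw [← Finset.Ico_add_one_right_eq_Icc, Finset.sum_Ico_eq_sum_range, ← Finset.sum_range_succ,
    Finset.sum_range_succ']
  simp [add_comm 1]

theorem sum_Icc_one_deriv_iterate_eq (N : ℕ) (x : ℝ) :
    ∑ k ∈ Finset.Icc 1 N, deriv f^[k] x =
      ∑ k ∈ Finset.range N, deriv f^[k] x + (deriv f^[N] x - 1) := by
  rw [sum_Icc_one_eq_sum_range_add_sub, iterate_zero, deriv_id, add_sub_assoc]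

theorem sum_range_deriv_iterate_pos (hf : Differentiable ℝ f) (hge : ∀ x, 1 ≤ deriv f x)
    {N : ℕ} (hN : N ≠ 0) (x : ℝ) : 0 < ∑ k ∈ Finset.range N, deriv f^[k] x :=
  Finset.sum_pos (fun k _ => one_pos.trans_le (one_le_deriv_iterate hf hge k x))
    (Finset.nonempty_range_iff.2 hN)

theorem one_le_sum_Icc_div_sum_range_deriv_iterate (hf : Differentiable ℝ f)
    (hge : ∀ x, 1 ≤ deriv f x) {N : ℕ} (hN : N ≠ 0) (x : ℝ) :
    1 ≤ (∑ k ∈ Finset.Icc 1 N, deriv f^[k] x) / ∑ k ∈ Finset.range N, deriv f^[k] x := by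
  rw [one_le_div (sum_range_deriv_iterate_pos hf hge hN x), sum_Icc_one_deriv_iterate_eq]
  linarith [one_le_deriv_iterate hf hge N x]

theorem sum_Icc_div_sum_range_deriv_iterate_eq_one_iff (hf : Differentiable ℝ f)
    (hge : ∀ x, 1 ≤ deriv f x) (hinv : MapsTo f {x | deriv f x = 1} {x | deriv f x = 1})
    {N : ℕ} (hN : N ≠ 0) (x : ℝ) :
    (∑ k ∈ Finset.Icc 1 N, deriv f^[k] x) / ∑ k ∈ Finset.range N, deriv f^[k] x = 1 ↔
      deriv f x = 1 := by
  rw [div_eq_one_iff_eq (sum_range_deriv_iterate_pos hf hge hN x).ne',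
    sum_Icc_one_deriv_iterate_eq, add_eq_left, sub_eq_zero, deriv_iterate_eq_one_iff hf hge hinv hN]

end Expanding

section Lift

variable {d : ℤ} {f : ℝ → ℝ}

theorem map_add_int_of_map_add_one (hf : ∀ x, f (x + 1) = f x + d) (x : ℝ) (m : ℤ) :
    f (x + m) = f x + m * d := by
  simpa using AddConstMapClass.map_add_int' (⟨f, hf⟩ : AddConstMap ℝ ℝ 1 (d : ℝ)) x m

theorem iterate_add_int_of_map_add_one (hf : ∀ x, f (x + 1) = f x + d) (k : ℕ) (x : ℝ)
    (m : ℤ) : f^[k] (x + m) = f^[k] x + m * d ^ k := by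
  induction k with
  | zero => simp
  | succ k ih =>
    rw [iterate_succ_apply', iterate_succ_apply', ih]
    exact_mod_cast by simpa [pow_succ, mul_assoc] using map_add_int_of_map_add_one hf _ (m * d ^ k)

theorem deriv_add_int_of_map_add_one (hf : ∀ x, f (x + 1) = f x + d) (x : ℝ) (m : ℤ) :
    deriv f (x + m) = deriv f x := by
  rw [← deriv_comp_add_const, funext fun y => map_add_int_of_map_add_one hf y m, deriv_add_const]

theorem mapsTo_par (hf : ∀ x, f (x + 1) = f x + d) (hdiff : Differentiable ℝ f)
    (hne : ∀ x, deriv f x ≠ 0) : MapsTo f (Par f) (Par f) := by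
  rintro x ⟨s, ⟨hs, m, hm⟩, hmul⟩
  have hper : f^[s] x = x + m := by linarith
  refine ⟨s, ⟨hs, m * d, ?_⟩, ?_⟩
  · rw [← iterate_succ_apply, iterate_succ_apply', hper, map_add_int_of_map_add_one hf]
    push_cast; ring
  · -- expand `f^[s+1]` as `f^[s] ∘ f` and as `f ∘ f^[s]`; as `f' (x + m) = f' x`,
    -- the factor `f' x` cancels
    have h := (deriv_iterate_succ_apply hdiff s x).symm.trans (deriv_iterate_succ_apply' hdiff s x)
    rw [hper, hmul, deriv_add_int_of_map_add_one hf, mul_one] at h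
    exact (mul_eq_right₀ (hne x)).1 h

end Lift

section Conjugation

variable {φ : ℝ → ℝ}

theorem StrictMono.hasDerivAt_invFun (hmono : StrictMono φ) (hsurj : Surjective φ) {φ' x : ℝ}
    (h : HasDerivAt φ φ' x) (h0 : φ' ≠ 0) : HasDerivAt (invFun φ) φ'⁻¹ (φ x) := by
  have hinv : invFun φ = (hmono.orderIsoOfSurjective φ hsurj).symm :=
    funext fun y => hmono.injective <|
      (invFun_eq (hsurj y)).trans (hmono.orderIsoOfSurjective_self_symm_apply φ hsurj y).symm
  have hcont : Continuous (invFun φ) :=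
    hinv ▸ (hmono.orderIsoOfSurjective φ hsurj).symm.continuous
  rw [← leftInverse_invFun hmono.injective x] at h
  exact h.of_local_left_inverse hcont.continuousAt h0 (.of_forall fun y => invFun_eq (hsurj y))

theorem StrictMono.deriv_conj_apply {H : ℝ → ℝ} (hmono : StrictMono φ) (hsurj : Surjective φ)
    (hφ : Differentiable ℝ φ) {x : ℝ} (hH : DifferentiableAt ℝ H x) (h0 : deriv φ x ≠ 0) :
    deriv (φ ∘ H ∘ invFun φ) (φ x) = deriv φ (H x) * deriv H x / deriv φ x := by
  have hinv := hmono.hasDerivAt_invFun hsurj (hφ x).hasDerivAt h0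
  rw [← leftInverse_invFun hmono.injective x] at hH
  have := ((hφ _).hasDerivAt.comp _ hH.hasDerivAt).comp _ hinv
  rw [← comp_assoc, this.deriv, leftInverse_invFun hmono.injective x, div_eq_mul_inv]

end Conjugation

section AveragedIterates

variable {f φ : ℝ → ℝ} {c : ℝ} {N : ℕ}

theorem hasDerivAt_of_eq_mul_sum_iterate (hf : Differentiable ℝ f)
    (hφ : ∀ x, φ x = c * ∑ k ∈ Finset.range N, f^[k] x) (x : ℝ) :
    HasDerivAt φ (c * ∑ k ∈ Finset.range N, deriv f^[k] x) x :=
  funext hφ ▸ (HasDerivAt.fun_sum fun k _ => (hf.iterate k x).hasDerivAt).const_mul c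

theorem sum_iterate_add_one {d : ℤ} (hf : ∀ x, f (x + 1) = f x + d) (x : ℝ) :
    ∑ k ∈ Finset.range N, f^[k] (x + 1) =
      ∑ k ∈ Finset.range N, f^[k] x + ∑ k ∈ Finset.range N, (d : ℝ) ^ k := by
  rw [← Finset.sum_add_distrib]
  exact Finset.sum_congr rfl fun k _ => by simpa using iterate_add_int_of_map_add_one hf k x 1

theorem sum_Icc_one_deriv_iterate_eq_mul (hf : Differentiable ℝ f) (x : ℝ) :
    ∑ k ∈ Finset.Icc 1 N, deriv f^[k] x =
      (∑ k ∈ Finset.range N, deriv f^[k] (f x)) * deriv f x := by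
  rw [← Finset.Ico_add_one_right_eq_Icc, Finset.sum_Ico_eq_sum_range, Finset.sum_mul,
    add_tsub_cancel_right]
  exact Finset.sum_congr rfl fun k _ => by rw [add_comm, deriv_iterate_succ_apply hf]

theorem deriv_conj_of_eq_mul_sum_iterate (hf : Differentiable ℝ f) (hc : c ≠ 0)
    (hφ : ∀ x, φ x = c * ∑ k ∈ Finset.range N, f^[k] x) (hmono : StrictMono φ)
    (hsurj : Surjective φ) {x : ℝ} (hS : ∑ k ∈ Finset.range N, deriv f^[k] x ≠ 0) :
    deriv (φ ∘ f ∘ invFun φ) (φ x) =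
      (∑ k ∈ Finset.Icc 1 N, deriv f^[k] x) / ∑ k ∈ Finset.range N, deriv f^[k] x := by
  have hφ' := hasDerivAt_of_eq_mul_sum_iterate hf hφ
  rw [hmono.deriv_conj_apply hsurj (fun y => (hφ' y).differentiableAt) (hf x)
      (by rw [(hφ' x).deriv]; exact mul_ne_zero hc hS),
    (hφ' _).deriv, (hφ' _).deriv, sum_Icc_one_deriv_iterate_eq_mul hf, mul_assoc,
    mul_div_mul_left _ _ hc]

end AveragedIterates

theorem stmt16 (d : ℤ) (hd : 2 ≤ d) (H : ℝ → ℝ) (hH : IsLift d H)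
    (hge : ∀ x, 1 ≤ deriv H x) (hpar : {x : ℝ | deriv H x = 1} = Par H)
    (N : ℕ) (hN : 0 < N) (L : ℝ) (hL : L = ((d : ℝ) ^ N - 1) / ((d : ℝ) - 1))
    (φ : ℝ → ℝ) (hφ : ∀ x, φ x = (1 / L) * ∑ k ∈ Finset.range N, H^[k] x) :
    (∀ x, φ (x + 1) = φ x + 1) ∧
    ContDiff ℝ 1 φ ∧ StrictMono φ ∧ Function.Bijective φ ∧
    (∀ x, 0 < deriv φ x) ∧
    (∀ x, deriv (φ ∘ H ∘ Function.invFun φ) (φ x) =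
      (∑ k ∈ Finset.Icc 1 N, deriv (H^[k]) x) /
        (∑ k ∈ Finset.range N, deriv (H^[k]) x)) ∧
    (∀ x, 1 ≤ deriv (φ ∘ H ∘ Function.invFun φ) (φ x)) ∧
    (∀ x, deriv (φ ∘ H ∘ Function.invFun φ) (φ x) = 1 ↔ x ∈ Par H) := by
  obtain ⟨hC1, hpos, hadd, -⟩ := hH
  have hdiff : Differentiable ℝ H := hC1.differentiable one_ne_zero
  have hd1 : (1 : ℝ) < d := by exact_mod_cast hd
  have hL_sum : L = ∑ k ∈ Finset.range N, (d : ℝ) ^ k := by rw [hL, geom_sum_eq hd1.ne']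
  have hLpos : 0 < L :=
    hL_sum ▸ Finset.sum_pos (fun k _ => by positivity) (Finset.nonempty_range_iff.2 hN.ne')
  have hS := sum_range_deriv_iterate_pos hdiff hge hN.ne'
  have hφ' := hasDerivAt_of_eq_mul_sum_iterate hdiff hφ
  have hφ'pos : ∀ x, 0 < deriv φ x := fun x => (hφ' x).deriv ▸ by have := hS x; positivity
  have hφ_add_one : ∀ x, φ (x + 1) = φ x + 1 := fun x => by
    rw [hφ, hφ, sum_iterate_add_one hadd, ← hL_sum]
    field_simp
  have hmono : StrictMono φ := strictMono_of_deriv_pos hφ'pos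
  have hsurj : Surjective φ :=
    (CircleDeg1Lift.mk ⟨φ, hmono.monotone⟩ hφ_add_one).continuous_iff_surjective.1
      (continuous_iff_continuousAt.2 fun x => (hφ' x).continuousAt)
  have hconj x :=
    deriv_conj_of_eq_mul_sum_iterate hdiff (one_div_pos.2 hLpos).ne' hφ hmono hsurj (hS x).ne'
  have hinv : MapsTo H {x | deriv H x = 1} {x | deriv H x = 1} :=
    hpar ▸ mapsTo_par hadd hdiff fun x => (hpos x).ne'
  refine ⟨hφ_add_one, funext hφ ▸ contDiff_const.mul (.sum fun k _ => hC1.iterate k), hmono,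
    ⟨hmono.injective, hsurj⟩, hφ'pos, hconj, fun x => ?_, fun x => ?_⟩
  · exact hconj x ▸ one_le_sum_Icc_div_sum_range_deriv_iterate hdiff hge hN.ne' x
  · rw [hconj, sum_Icc_div_sum_range_deriv_iterate_eq_one_iff hdiff hge hinv hN.ne', ← hpar,
      Set.mem_ofPred_eq]
end

section
/- Let d ≥ 2 be an integer, r := (d − 1)/(d + 1), and define the complex maps M_r(z) := (z + r)/(1 + r·z), h_d(z) := (z^d + r)/(r·z^d + 1), and g(z) := (M_r(z))^d. Then: (i) for every z ∈ ℂ with |z| = 1 one has |M_r(z)| = 1 and |g(z)| = 1; (ii) for every z ∈ ℂ with 1 + r·z ≠ 0 and 1 + r·z^d ≠ 0 one has h_d(M_r(z)) = M_r(g(z)), i.e. g = M_r⁻¹ ∘ h_d ∘ M_r; (iii) g(1) = 1 and the complex derivative of g at 1 equals 1; and (iv) for every z with |z| = 1 and z ≠ 1, the modulus of the complex derivative of g at z is strictly greater than 1 (so g restricted to the unit circle is metrically expanding with unique parabolic point 1). -/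
open Function Set Filter Asymptotics

/-! For real `r` with `|r| < 1` the Möbius map `M_r` preserves the unit circle, because there
`z + r = z * conj (1 + r z)`. Hence on the circle `|g'(z)| = d (1 - r²) / |1 + r z|²`, and
`|1 + r z|` is largest exactly at `z = 1`, where the choice `r = (d - 1) / (d + 1)` gives
`d (1 - r²) = (1 + r)²`, i.e. `g'(1) = 1`. -/

namespace Complex

lemma re_lt_one_of_norm_eq_one {z : ℂ} (hz : ‖z‖ = 1) (h1 : z ≠ 1) : z.re < 1 :=
  (hz ▸ re_le_norm z).lt_of_ne fun h => h1 <| by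
    rw [eq_coe_norm_of_nonneg (re_eq_norm.1 (h.trans hz.symm)), hz, ofReal_one]

lemma one_add_ofReal_mul_ne_zero {r : ℝ} (hr : |r| < 1) {z : ℂ} (hz : ‖z‖ = 1) :
    1 + (r : ℂ) * z ≠ 0 := fun h => by
  have : ‖(r : ℂ) * z‖ = ‖(-1 : ℂ)‖ := congrArg norm (by linear_combination h)
  rw [norm_mul, norm_real, Real.norm_eq_abs, hz, mul_one, norm_neg, norm_one] at this
  exact hr.ne this

lemma sq_norm_one_add_ofReal_mul {r : ℝ} {z : ℂ} (hz : ‖z‖ = 1) :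
    ‖1 + (r : ℂ) * z‖ ^ 2 = 1 + 2 * r * z.re + r ^ 2 := by
  have hsq : z.re * z.re + z.im * z.im = 1 := by
    rw [← normSq_apply, ← Complex.sq_norm, hz, one_pow]
  rw [Complex.sq_norm, normSq_apply]
  simp only [add_re, add_im, one_re, one_im, mul_re, mul_im, ofReal_re, ofReal_im]
  linear_combination r ^ 2 * hsq

lemma sq_norm_one_add_ofReal_mul_lt {r : ℝ} (hr : 0 < r) {z : ℂ} (hz : ‖z‖ = 1) (h1 : z ≠ 1) :
    ‖1 + (r : ℂ) * z‖ ^ 2 < (1 + r) ^ 2 := by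
  rw [sq_norm_one_add_ofReal_mul hz]
  nlinarith [re_lt_one_of_norm_eq_one hz h1]

end Complex


open Complex ComplexConjugate

noncomputable def mobius (r : ℝ) (z : ℂ) : ℂ := (z + r) / (1 + r * z)

lemma norm_mobius_of_norm_eq_one {r : ℝ} (hr : |r| < 1) {z : ℂ} (hz : ‖z‖ = 1) :
    ‖mobius r z‖ = 1 := by
  have key : z + r = z * conj (1 + r * z) := by
    rw [map_add, map_mul, map_one, conj_ofReal, mul_add, mul_one, ← mul_assoc,
      mul_comm z, mul_assoc, mul_conj', hz]
    push_cast; ring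
  rw [mobius, norm_div, key, norm_mul, norm_conj, hz, one_mul,
    div_self (norm_ne_zero_iff.2 (one_add_ofReal_mul_ne_zero hr hz))]

lemma hasDerivAt_mobius (r : ℝ) {z : ℂ} (hz : 1 + (r : ℂ) * z ≠ 0) :
    HasDerivAt (mobius r) ((1 - (r : ℂ) ^ 2) / (1 + r * z) ^ 2) z := by
  have hnum : HasDerivAt (fun w : ℂ => w + r) 1 z := (hasDerivAt_id z).add_const _
  have hden : HasDerivAt (fun w : ℂ => 1 + r * w) r z := by
    simpa using ((hasDerivAt_id z).const_mul (r : ℂ)).const_add 1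
  exact (hnum.fun_div hden hz).congr_deriv (by ring)

lemma norm_deriv_mobius_pow_of_norm_eq_one {r : ℝ} (hr : |r| < 1) (d : ℕ) {z : ℂ}
    (hz : ‖z‖ = 1) :
    ‖deriv (fun w => mobius r w ^ d) z‖ = d * (1 - r ^ 2) / ‖1 + (r : ℂ) * z‖ ^ 2 := by
  have hr2 : 0 < 1 - r ^ 2 := by nlinarith [abs_nonneg r, sq_abs r]
  rw [((hasDerivAt_mobius r (one_add_ofReal_mul_ne_zero hr hz)).fun_pow d).deriv, norm_mul,
    norm_mul, norm_pow, norm_mobius_of_norm_eq_one hr hz, one_pow, mul_one, norm_div,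
    norm_pow, norm_natCast, mul_div_assoc]
  congr 2
  rw [← ofReal_pow, ← ofReal_one, ← ofReal_sub, norm_real, Real.norm_of_nonneg hr2.le]

lemma mobius_one {r : ℝ} (hr : 1 + (r : ℂ) ≠ 0) : mobius r 1 = 1 := by
  rw [mobius, mul_one, div_self hr]

lemma deriv_mobius_pow_one {r : ℝ} (hr : 1 + (r : ℂ) ≠ 0) (d : ℕ) :
    deriv (fun w => mobius r w ^ d) 1 = d * (1 - (r : ℂ) ^ 2) / (1 + r) ^ 2 := by
  rw [((hasDerivAt_mobius r (by rwa [mul_one])).fun_pow d).deriv, mobius_one hr, one_pow,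
    mul_one, mul_one, mul_div_assoc]

theorem stmt17 (d : ℕ) (hd : 2 ≤ d) (r : ℝ) (hr : r = ((d : ℝ) - 1) / ((d : ℝ) + 1))
    (Mr hd' g : ℂ → ℂ)
    (hMr : ∀ z : ℂ, Mr z = (z + (r : ℂ)) / (1 + (r : ℂ) * z))
    (hhd : ∀ z : ℂ, hd' z = (z ^ d + (r : ℂ)) / ((r : ℂ) * z ^ d + 1))
    (hg : ∀ z : ℂ, g z = (Mr z) ^ d) :
    (∀ z : ℂ, ‖z‖ = 1 → ‖Mr z‖ = 1 ∧ ‖g z‖ = 1) ∧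
    (∀ z : ℂ, 1 + (r : ℂ) * z ≠ 0 → 1 + (r : ℂ) * z ^ d ≠ 0 →
      hd' (Mr z) = Mr (g z)) ∧
    (g 1 = 1 ∧ deriv g 1 = 1) ∧
    (∀ z : ℂ, ‖z‖ = 1 → z ≠ 1 → 1 < ‖deriv g z‖) := by
  have hd2 : (2 : ℝ) ≤ d := by exact_mod_cast hd
  have hr0 : 0 < r := by rw [hr]; exact div_pos (by linarith) (by linarith)
  have hr1 : |r| < 1 := by
    rw [abs_of_pos hr0, hr, div_lt_one (by linarith)]; linarith
  have hr1' : 1 + (r : ℂ) ≠ 0 := by exact_mod_cast (by linarith : 1 + r ≠ 0)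
  have hdr : (d : ℝ) * (1 - r ^ 2) = (1 + r) ^ 2 := by
    rw [hr]; field_simp; ring
  obtain rfl : Mr = mobius r := funext hMr
  obtain rfl : g = fun z => mobius r z ^ d := funext hg
  refine ⟨fun z hz => ?_, fun z _ _ => ?_, ⟨?_, ?_⟩, fun z hz hz1 => ?_⟩
  · have hM := norm_mobius_of_norm_eq_one hr1 hz
    exact ⟨hM, by rw [norm_pow, hM, one_pow]⟩
  · rw [hhd, add_comm _ (1 : ℂ)]; rfl
  · beta_reduce; rw [mobius_one hr1', one_pow]
  · rw [deriv_mobius_pow_one hr1', div_eq_one_iff_eq (pow_ne_zero 2 hr1')]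
    exact_mod_cast hdr
  · have hpos : 0 < ‖1 + (r : ℂ) * z‖ ^ 2 :=
      pow_pos (norm_pos_iff.2 (one_add_ofReal_mul_ne_zero hr1 hz)) 2
    rw [norm_deriv_mobius_pow_of_norm_eq_one hr1 d hz, one_lt_div hpos, hdr]
    exact sq_norm_one_add_ofReal_mul_lt hr0 hz hz1
end
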